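/- Let (ψ,φ) be a reproducing pair of weakly measurable functions X → H and Ĉ_{ψ,φ}f := [⟨f,ψ(·)⟩]_φ ∈ V_φ(X,μ). Then: (i) there exist constants m, M > 0 such that m‖f‖ ≤ ‖Ĉ_{ψ,φ}f‖_φ ≤ M‖f‖ for all f ∈ H (one may take m = ‖S_{ψ,φ}^{-1}‖^{-1} and M = ‖S_{ψ,φ}‖); consequently the range of Ĉ_{ψ,φ} is a closed subspace of V_φ(X,μ); (ii) every class [η]_ψ ∈ V_ψ(X,μ) defines a bounded linear functional on the closed subspace Ran Ĉ_{ψ,φ} via [⟨f,ψ(·)⟩]_φ ↦ ∫_X ⟨f,ψ(x)⟩ conj(η(x)) dμ(x), with |∫_X ⟨f,ψ(x)⟩ conj(η(x)) dμ(x)| ≤ ‖S_{ψ,φ}^{-1}‖ · ‖Ĉ_{ψ,φ}f‖_φ · ‖[η]_ψ‖_ψ for all f ∈ H. -/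

import Mathlib

/-!
Testing `Ĉ_{ψ,φ} f = ⟨f, ψ(·)⟩` against `g` gives `Ω_{ψ,φ}(f, g) = ⟨S f, g⟩`, i.e.
`T_φ Ĉ_{ψ,φ} = S`, while `‖[ξ]_φ‖_φ = ‖T_φ ξ‖` because a norm is the supremum of the inner
products with unit vectors. Hence `‖Ĉ_{ψ,φ} f‖_φ = ‖S f‖`, which yields both bounds of (i);
`Ĉ_{ψ,φ}` is even onto `V_φ(X,μ)` because `S` is. For (ii),
`∫ ⟨f, ψ(x)⟩ conj(η(x)) dμ(x) = ⟨f, T_ψ η⟩`, so Cauchy–Schwarz and the lower bound of (i) finish.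
-/

open MeasureTheory Filter Topology
open scoped Classical ENNReal NNReal

noncomputable section

variable {H : Type*} [NormedAddCommGroup H] [InnerProductSpace ℂ H] [CompleteSpace H]
  [TopologicalSpace.SeparableSpace H]
variable {X : Type*} [TopologicalSpace X] [LocallyCompactSpace X] [MeasurableSpace X]
  [BorelSpace X]

/-- Notation for the Mathlib inner product (conjugate-linear in the first slot);
the paper's inner product `⟨f, g⟩` (linear in the first slot) is `⟪g, f⟫`. -/
local notation "⟪" x ", " y "⟫" => @inner ℂ _ _ x y

/-- `φ : X → H` is weakly measurable: `x ↦ ⟨f, φ x⟩` is measurable for every `f ∈ H`. -/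
def WeaklyMeasurable (φ : X → H) : Prop :=
  ∀ f : H, Measurable fun x => ⟪φ x, f⟫

/-- `ξ ∈ 𝒱_φ(X,μ)`: `ξ` is measurable, the integral `∫ ξ(x) ⟨φ(x), g⟩ dμ(x)` exists for all
`g ∈ H`, and it defines a bounded conjugate-linear functional of `g`. -/
def MemV (μ : Measure X) (φ : X → H) (ξ : X → ℂ) : Prop :=
  Measurable ξ ∧ (∀ g : H, Integrable (fun x => ξ x * ⟪g, φ x⟫) μ) ∧
    ∃ c : ℝ, ∀ g : H, ‖∫ x, ξ x * ⟪g, φ x⟫ ∂μ‖ ≤ c * ‖g‖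

/-- The map `T_φ : 𝒱_φ(X,μ) → H`, determined weakly by
`⟨T_φ ξ, g⟩ = ∫ ξ(x) ⟨φ(x), g⟩ dμ(x)` for all `g ∈ H` (junk value `0` off `𝒱_φ`). -/
def Tmap (μ : Measure X) (φ : X → H) (ξ : X → ℂ) : H :=
  if h : MemV μ φ ξ then
    have key : ∀ g : H, Integrable (fun x => (starRingEnd ℂ) (ξ x) * ⟪φ x, g⟫) μ := by
      intro g
      have h2 : Integrable (fun x => (RCLike.conjLIE : ℂ ≃ₗᵢ[ℝ] ℂ) (ξ x * ⟪g, φ x⟫)) μ :=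
        ((RCLike.conjLIE : ℂ ≃ₗᵢ[ℝ] ℂ).integrable_comp_iff).2 (h.2.1 g)
      simpa [RCLike.conjLIE_apply, map_mul] using h2
    (InnerProductSpace.toDual ℂ H).symm
      (LinearMap.mkContinuousOfExistsBound
        { toFun := fun g => ∫ x, (starRingEnd ℂ) (ξ x) * ⟪φ x, g⟫ ∂μ
          map_add' := fun g g' => by
            simp only [inner_add_right, mul_add]
            exact integral_add (key g) (key g')
          map_smul' := fun c g => by
            simp only [inner_smul_right, RingHom.id_apply]
            calc ∫ x, (starRingEnd ℂ) (ξ x) * (c * ⟪φ x, g⟫) ∂μ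
                = ∫ x, c * ((starRingEnd ℂ) (ξ x) * ⟪φ x, g⟫) ∂μ := by
                  simp only [mul_left_comm]
              _ = c * ∫ x, (starRingEnd ℂ) (ξ x) * ⟪φ x, g⟫ ∂μ := integral_const_mul .. }
        (by
          obtain ⟨c, hc⟩ := h.2.2
          refine ⟨c, fun g => ?_⟩
          have he : ∫ x, (starRingEnd ℂ) (ξ x) * ⟪φ x, g⟫ ∂μ
              = (starRingEnd ℂ) (∫ x, ξ x * ⟪g, φ x⟫ ∂μ) := by
            rw [← integral_conj]
            congr 1; funext x
            simp [map_mul]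
          simp only [LinearMap.coe_mk, AddHom.coe_mk]
          rw [he, RCLike.norm_conj]
          exact hc g))
  else 0

/-- The norm `‖[ξ]_φ‖_φ = sup_{‖g‖ ≤ 1} |∫ ξ(x) ⟨φ(x), g⟩ dμ(x)|` (computed on a
representative; it only depends on the class `[ξ]_φ = ξ + Ker T_φ`). -/
def Vnorm (μ : Measure X) (φ : X → H) (ξ : X → ℂ) : ℝ :=
  ⨆ g : {g : H // ‖g‖ ≤ 1}, ‖∫ x, ξ x * ⟪(g : H), φ x⟫ ∂μ‖

/-- The range of `T̂_φ : V_φ(X,μ) → H` (equivalently, of `T_φ` on `𝒱_φ(X,μ)`). -/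
def Tran (μ : Measure X) (φ : X → H) : Set H := Tmap μ φ '' {ξ | MemV μ φ ξ}

/-- The analysis coefficient map: `(C_ψ f)(x) = ⟨f, ψ(x)⟩`. -/
def Cpsi (ψ : X → H) (f : H) : X → ℂ := fun x => ⟪ψ x, f⟫

/-- `φ` is `μ`-total: `Ker C_φ = {0}`, i.e. if `∫ ξ(x) ⟨φ(x), f⟩ dμ(x) = 0` for every
`ξ ∈ 𝒱_φ(X,μ)`, then `f = 0`. -/
def MuTotal (μ : Measure X) (φ : X → H) : Prop :=
  ∀ f : H, (∀ ξ, MemV μ φ ξ → ∫ x, ξ x * ⟪f, φ x⟫ ∂μ = 0) → f = 0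

/-- `S : H ≃L[ℂ] H` represents the sesquilinear form `Ω_{ψ,φ}`:
`⟨S f, g⟩ = ∫ ⟨f, ψ(x)⟩ ⟨φ(x), g⟩ dμ(x)` for all `f, g ∈ H`. -/
def IsAnalysisOp (μ : Measure X) (ψ φ : X → H) (S : H ≃L[ℂ] H) : Prop :=
  ∀ f g : H, ⟪g, S f⟫ = ∫ x, ⟪ψ x, f⟫ * ⟪g, φ x⟫ ∂μ

/-- `(ψ, φ)` is a reproducing pair: both weakly measurable, the form
`Ω_{ψ,φ}(f,g) = ∫ ⟨f,ψ(x)⟩⟨φ(x),g⟩ dμ(x)` is well defined (integrable) and bounded, and the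
associated bounded operator `S_{ψ,φ}` has a bounded everywhere-defined inverse. -/
def IsReproducingPair (μ : Measure X) (ψ φ : X → H) : Prop :=
  WeaklyMeasurable ψ ∧ WeaklyMeasurable φ ∧
    (∀ f g : H, Integrable (fun x => ⟪ψ x, f⟫ * ⟪g, φ x⟫) μ) ∧
    ∃ S : H ≃L[ℂ] H, IsAnalysisOp μ ψ φ S

/-- Completeness of `V_φ(X,μ)` in the norm `‖·‖_φ`, phrased via representatives:
every `‖·‖_φ`-Cauchy sequence of elements of `𝒱_φ(X,μ)` converges in `‖·‖_φ`
to an element of `𝒱_φ(X,μ)`. -/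
def VComplete (μ : Measure X) (φ : X → H) : Prop :=
  ∀ ξ : ℕ → X → ℂ, (∀ n, MemV μ φ (ξ n)) →
    (∀ ε : ℝ, 0 < ε → ∃ N, ∀ m ≥ N, ∀ n ≥ N, Vnorm μ φ (ξ m - ξ n) < ε) →
    ∃ η, MemV μ φ η ∧ Tendsto (fun n => Vnorm μ φ (ξ n - η)) atTop (𝓝 0)

/-- `F` is (induced by) a bounded linear functional on `V_φ(X,μ)`: it is linear on `𝒱_φ(X,μ)`,
constant on the classes of `V_φ(X,μ) = 𝒱_φ(X,μ)/Ker T_φ`, and bounded for `‖·‖_φ`. -/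
def IsBddLinearFunctional (μ : Measure X) (φ : X → H) (F : (X → ℂ) → ℂ) : Prop :=
  (∀ ξ η, MemV μ φ ξ → MemV μ φ η → F (ξ + η) = F ξ + F η) ∧
  (∀ (c : ℂ) ξ, MemV μ φ ξ → F (c • ξ) = c * F ξ) ∧
  (∀ ξ η, MemV μ φ ξ → MemV μ φ η → Tmap μ φ (ξ - η) = 0 → F ξ = F η) ∧
  ∃ c : ℝ, ∀ ξ, MemV μ φ ξ → ‖F ξ‖ ≤ c * Vnorm μ φ ξ

/-- The dual norm `‖F‖_{φ*} = sup_{‖[ξ]_φ‖_φ ≤ 1} |F([ξ]_φ)|`. -/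
def DualNorm (μ : Measure X) (φ : X → H) (F : (X → ℂ) → ℂ) : ℝ :=
  ⨆ ξ : {ξ : X → ℂ // MemV μ φ ξ ∧ Vnorm μ φ ξ ≤ 1}, ‖F ξ.1‖

/-- `V_φ(X,μ)` and `V_ψ(X,μ)` are conjugate dual to each other with respect to the pairing
`⟨⟨ξ, η⟩⟩ = ∫ ξ(x) conj(η(x)) dμ(x)`: the pairing is well defined, each class `[η]_ψ` gives a
bounded linear functional on `V_φ(X,μ)`, and `[η]_ψ ↦ ⟨⟨·, η⟩⟩` is a bijection from `V_ψ(X,μ)`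
onto the dual of `V_φ(X,μ)`. -/
def ConjDual (μ : Measure X) (φ ψ : X → H) : Prop :=
  (∀ ξ η, MemV μ φ ξ → MemV μ ψ η →
      Integrable (fun x => ξ x * (starRingEnd ℂ) (η x)) μ) ∧
  (∀ η, MemV μ ψ η →
      IsBddLinearFunctional μ φ (fun ξ => ∫ x, ξ x * (starRingEnd ℂ) (η x) ∂μ)) ∧
  (∀ η η', MemV μ ψ η → MemV μ ψ η' →
      (∀ ξ, MemV μ φ ξ →
        ∫ x, ξ x * (starRingEnd ℂ) (η x) ∂μ = ∫ x, ξ x * (starRingEnd ℂ) (η' x) ∂μ) →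
      Tmap μ ψ (η - η') = 0) ∧
  (∀ F, IsBddLinearFunctional μ φ F →
      ∃ η, MemV μ ψ η ∧ ∀ ξ, MemV μ φ ξ → F ξ = ∫ x, ξ x * (starRingEnd ℂ) (η x) ∂μ)


section InnerProduct

omit [CompleteSpace H] [TopologicalSpace.SeparableSpace H] [TopologicalSpace X]
  [LocallyCompactSpace X] [BorelSpace X]

variable {μ : Measure X} {χ : X → H}

lemma iSup_norm_inner_le_one (h : H) :
    ⨆ g : {g : H // ‖g‖ ≤ 1}, ‖⟪(g : H), h⟫‖ = ‖h‖ := by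
  have hball : {g : H | ‖g‖ ≤ 1} = Metric.closedBall 0 1 := by ext; simp
  rw [← innerSL_apply_norm ℂ h, ← (innerSL ℂ h).sSup_unitClosedBall_eq_norm, ← hball,
    sSup_image']
  simp only [innerSL_apply_apply, norm_inner_symm h]
  rfl

lemma Vnorm_eq_norm_of_integral_eq_inner {ξ : X → ℂ} {h : H}
    (hξ : ∀ g, ∫ x, ξ x * ⟪g, χ x⟫ ∂μ = ⟪g, h⟫) : Vnorm μ χ ξ = ‖h‖ := by
  simp only [Vnorm, hξ, iSup_norm_inner_le_one]

lemma MemV.of_integral_eq_inner {ξ : X → ℂ} {h : H} (hm : Measurable ξ)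
    (hi : ∀ g, Integrable (fun x => ξ x * ⟪g, χ x⟫) μ)
    (hξ : ∀ g, ∫ x, ξ x * ⟪g, χ x⟫ ∂μ = ⟪g, h⟫) : MemV μ χ ξ :=
  ⟨hm, hi, ‖h‖, fun g => by rw [hξ, mul_comm]; exact norm_inner_le_norm g h⟩

end InnerProduct

section WeakIntegral

omit [TopologicalSpace.SeparableSpace H] [TopologicalSpace X] [LocallyCompactSpace X]
  [BorelSpace X]

variable {μ : Measure X} {χ : X → H}

lemma inner_Tmap {ξ : X → ℂ} (hξ : MemV μ χ ξ) (g : H) :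
    ⟪g, Tmap μ χ ξ⟫ = ∫ x, ξ x * ⟪g, χ x⟫ ∂μ := by
  rw [← inner_conj_symm, Tmap, dif_pos hξ, InnerProductSpace.toDual_symm_apply,
    LinearMap.mkContinuousOfExistsBound_apply, LinearMap.coe_mk, AddHom.coe_mk, ← integral_conj]
  simp

lemma Vnorm_eq_norm_Tmap {ξ : X → ℂ} (hξ : MemV μ χ ξ) : Vnorm μ χ ξ = ‖Tmap μ χ ξ‖ :=
  Vnorm_eq_norm_of_integral_eq_inner fun g => (inner_Tmap hξ g).symm

lemma Tmap_eq_of_integral_eq_inner {ξ : X → ℂ} {h : H} (hm : Measurable ξ)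
    (hi : ∀ g, Integrable (fun x => ξ x * ⟪g, χ x⟫) μ)
    (hξ : ∀ g, ∫ x, ξ x * ⟪g, χ x⟫ ∂μ = ⟪g, h⟫) : Tmap μ χ ξ = h :=
  ext_inner_left ℂ fun g => by rw [inner_Tmap (.of_integral_eq_inner hm hi hξ), hξ]

lemma Tmap_sub {ξ η : X → ℂ} (hξ : MemV μ χ ξ) (hη : MemV μ χ η) :
    Tmap μ χ (ξ - η) = Tmap μ χ ξ - Tmap μ χ η := by
  have hi : ∀ g, Integrable (fun x => (ξ - η) x * ⟪g, χ x⟫) μ := fun g => by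
    simpa only [Pi.sub_apply, sub_mul] using (hξ.2.1 g).sub' (hη.2.1 g)
  refine Tmap_eq_of_integral_eq_inner (hξ.1.sub hη.1) hi fun g => ?_
  simp only [Pi.sub_apply, sub_mul, inner_sub_right]
  rw [integral_sub (hξ.2.1 g) (hη.2.1 g), inner_Tmap hξ, inner_Tmap hη]

lemma integral_inner_mul_conj {η : X → ℂ} (hη : MemV μ χ η) (f : H) :
    ∫ x, ⟪χ x, f⟫ * (starRingEnd ℂ) (η x) ∂μ = ⟪Tmap μ χ η, f⟫ := by
  rw [← inner_conj_symm, inner_Tmap hη, ← integral_conj]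
  simp [mul_comm]

end WeakIntegral

namespace IsAnalysisOp

omit [TopologicalSpace.SeparableSpace H] [TopologicalSpace X] [LocallyCompactSpace X]
  [BorelSpace X]

variable {μ : Measure X} {ψ φ : X → H} {S : H ≃L[ℂ] H}

omit [CompleteSpace H] in
lemma Vnorm_Cpsi (hS : IsAnalysisOp μ ψ φ S) (f : H) : Vnorm μ φ (Cpsi ψ f) = ‖S f‖ :=
  Vnorm_eq_norm_of_integral_eq_inner fun g => (hS f g).symm

omit [CompleteSpace H] in
lemma memV_Cpsi (hS : IsAnalysisOp μ ψ φ S) (hψ : WeaklyMeasurable ψ)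
    (hΩ : ∀ f g : H, Integrable (fun x => ⟪ψ x, f⟫ * ⟪g, φ x⟫) μ) (f : H) :
    MemV μ φ (Cpsi ψ f) :=
  .of_integral_eq_inner (hψ f) (hΩ f) fun g => (hS f g).symm

lemma Tmap_Cpsi (hS : IsAnalysisOp μ ψ φ S) (hψ : WeaklyMeasurable ψ)
    (hΩ : ∀ f g : H, Integrable (fun x => ⟪ψ x, f⟫ * ⟪g, φ x⟫) μ) (f : H) :
    Tmap μ φ (Cpsi ψ f) = S f :=
  Tmap_eq_of_integral_eq_inner (hψ f) (hΩ f) fun g => (hS f g).symm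

lemma exists_Tmap_Cpsi_sub_eq_zero (hS : IsAnalysisOp μ ψ φ S) (hψ : WeaklyMeasurable ψ)
    (hΩ : ∀ f g : H, Integrable (fun x => ⟪ψ x, f⟫ * ⟪g, φ x⟫) μ)
    {ξ : X → ℂ} (hξ : MemV μ φ ξ) : ∃ f₀ : H, Tmap μ φ (Cpsi ψ f₀ - ξ) = 0 :=
  ⟨S.symm (Tmap μ φ ξ), by
    rw [Tmap_sub (hS.memV_Cpsi hψ hΩ _) hξ, hS.Tmap_Cpsi hψ hΩ, S.apply_symm_apply, sub_self]⟩

end IsAnalysisOp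

theorem statement8_general [Nontrivial H] (μ : Measure X) (ψ φ : X → H) (S : H ≃L[ℂ] H)
    (hψ : WeaklyMeasurable ψ)
    (hΩ : ∀ f g : H, Integrable (fun x => ⟪ψ x, f⟫ * ⟪g, φ x⟫) μ)
    (hS : IsAnalysisOp μ ψ φ S) :
    -- (i) with the explicit constants `m = ‖S⁻¹‖⁻¹` and `M = ‖S‖`
    (∀ f : H, ‖f‖ ≤ ‖(S.symm : H →L[ℂ] H)‖ * Vnorm μ φ (Cpsi ψ f) ∧
        Vnorm μ φ (Cpsi ψ f) ≤ ‖(S : H →L[ℂ] H)‖ * ‖f‖) ∧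
    (∃ m M : ℝ, 0 < m ∧ 0 < M ∧ ∀ f : H,
        m * ‖f‖ ≤ Vnorm μ φ (Cpsi ψ f) ∧ Vnorm μ φ (Cpsi ψ f) ≤ M * ‖f‖) ∧
    -- `Ran Ĉ_{ψ,φ}` is closed in `V_φ(X,μ)`
    (∀ (f : ℕ → H) (ξ : X → ℂ), MemV μ φ ξ →
        Tendsto (fun n => Vnorm μ φ (Cpsi ψ (f n) - ξ)) atTop (𝓝 0) →
        ∃ f₀ : H, Tmap μ φ (Cpsi ψ f₀ - ξ) = 0) ∧
    -- (ii)
    (∀ η, MemV μ ψ η → ∀ f : H,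
        ‖∫ x, ⟪ψ x, f⟫ * (starRingEnd ℂ) (η x) ∂μ‖ ≤
          ‖(S.symm : H →L[ℂ] H)‖ * Vnorm μ φ (Cpsi ψ f) * Vnorm μ ψ η) := by
  have hlow (f : H) : ‖f‖ ≤ ‖(S.symm : H →L[ℂ] H)‖ * Vnorm μ φ (Cpsi ψ f) := by
    simpa [hS.Vnorm_Cpsi] using (S.symm : H →L[ℂ] H).le_opNorm (S f)
  have hup (f : H) : Vnorm μ φ (Cpsi ψ f) ≤ ‖(S : H →L[ℂ] H)‖ * ‖f‖ := by
    simpa [hS.Vnorm_Cpsi] using (S : H →L[ℂ] H).le_opNorm f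
  refine ⟨fun f => ⟨hlow f, hup f⟩, ⟨_, _, inv_pos.2 S.norm_symm_pos, S.norm_pos, fun f =>
    ⟨(inv_mul_le_iff₀ S.norm_symm_pos).2 (hlow f), hup f⟩⟩,
    fun _ ξ hξ _ => hS.exists_Tmap_Cpsi_sub_eq_zero hψ hΩ hξ, fun η hη f => ?_⟩
  calc ‖∫ x, ⟪ψ x, f⟫ * (starRingEnd ℂ) (η x) ∂μ‖ = ‖⟪Tmap μ ψ η, f⟫‖ := by
        rw [integral_inner_mul_conj hη]
    _ ≤ ‖Tmap μ ψ η‖ * ‖f‖ := norm_inner_le_norm _ _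
    _ ≤ ‖Tmap μ ψ η‖ * (‖(S.symm : H →L[ℂ] H)‖ * Vnorm μ φ (Cpsi ψ f)) := by
        gcongr; exact hlow f
    _ = _ := by rw [Vnorm_eq_norm_Tmap hη]; ring

/-- Let `(ψ,φ)` be a reproducing pair (with operator `S = S_{ψ,φ}`) and
`Ĉ_{ψ,φ}f := [⟨f,ψ(·)⟩]_φ`. Then (i) `m‖f‖ ≤ ‖Ĉ_{ψ,φ}f‖_φ ≤ M‖f‖` with `m = ‖S⁻¹‖⁻¹`,
`M = ‖S‖`; hence the range of `Ĉ_{ψ,φ}` is closed in `V_φ(X,μ)`; (ii) every `[η]_ψ` defines a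
bounded linear functional on `Ran Ĉ_{ψ,φ}` with the stated bound. -/
theorem statement8 [Nontrivial H] (μ : Measure X) [μ.Regular] (ψ φ : X → H) (S : H ≃L[ℂ] H)
    (hψ : WeaklyMeasurable ψ) (hφ : WeaklyMeasurable φ)
    (hΩ : ∀ f g : H, Integrable (fun x => ⟪ψ x, f⟫ * ⟪g, φ x⟫) μ)
    (hS : IsAnalysisOp μ ψ φ S) :
    -- (i) with the explicit constants `m = ‖S⁻¹‖⁻¹` and `M = ‖S‖`
    (∀ f : H, ‖f‖ ≤ ‖(S.symm : H →L[ℂ] H)‖ * Vnorm μ φ (Cpsi ψ f) ∧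
        Vnorm μ φ (Cpsi ψ f) ≤ ‖(S : H →L[ℂ] H)‖ * ‖f‖) ∧
    (∃ m M : ℝ, 0 < m ∧ 0 < M ∧ ∀ f : H,
        m * ‖f‖ ≤ Vnorm μ φ (Cpsi ψ f) ∧ Vnorm μ φ (Cpsi ψ f) ≤ M * ‖f‖) ∧
    -- `Ran Ĉ_{ψ,φ}` is closed in `V_φ(X,μ)`
    (∀ (f : ℕ → H) (ξ : X → ℂ), MemV μ φ ξ →
        Tendsto (fun n => Vnorm μ φ (Cpsi ψ (f n) - ξ)) atTop (𝓝 0) →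
        ∃ f₀ : H, Tmap μ φ (Cpsi ψ f₀ - ξ) = 0) ∧
    -- (ii)
    (∀ η, MemV μ ψ η → ∀ f : H,
        ‖∫ x, ⟪ψ x, f⟫ * (starRingEnd ℂ) (η x) ∂μ‖ ≤
          ‖(S.symm : H →L[ℂ] H)‖ * Vnorm μ φ (Cpsi ψ f) * Vnorm μ ψ η) :=
  statement8_general μ ψ φ S hψ hΩ hS
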